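/- The normalization factor κ satisfies the crossing relation κ(ζ) κ(εxζ) = ε b(ζ) for ε = ±1, where b(ζ) = x(ζ² − 1)/(1 − x²ζ²). -/

import Mathlib

/-- Infinite product `(a; p)∞ = ∏_{k ≥ 0} (1 − a p^k)`. -/
noncomputable def poch (a p : ℂ) : ℂ := ∏' k : ℕ, (1 - a * p ^ k)

/-- The normalization factor `κ(ζ)`, `z = ζ²`. -/
noncomputable def kappa (x ζ : ℂ) : ℂ :=
  ζ * (poch (x^4 * ζ^2) (x^4) * poch (x^2 * (ζ^2)⁻¹) (x^4)) /
    (poch (x^4 * (ζ^2)⁻¹) (x^4) * poch (x^2 * ζ^2) (x^4))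

noncomputable def bw (x ζ : ℂ) : ℂ := x * (ζ^2 - 1) / (1 - x^2 * ζ^2)

/-!
Replacing `ζ` by `±xζ` replaces `z` by `x²z`, which moves each of the four products in `κ` one
step along the base `x⁴`. Two of the shifted products cancel against products of `κ(ζ)`, and
each of the other two differs from a product of `κ(ζ)` by its leading factor, `1 − z⁻¹` or
`1 − x²z`; together with the prefactor `ζ · (±xζ)` these give `±b(ζ)`.
-/

section Poch

variable {p : ℂ}

lemma summable_norm_mul_pow (a : ℂ) (hp : ‖p‖ < 1) : Summable fun k : ℕ => ‖a * p ^ k‖ := by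
  simpa only [norm_mul, norm_pow] using
    (summable_geometric_of_lt_one (norm_nonneg p) hp).mul_left ‖a‖

lemma multipliable_one_sub_mul_pow (a : ℂ) (hp : ‖p‖ < 1) :
    Multipliable fun k : ℕ => 1 - a * p ^ k := by
  simpa only [sub_eq_add_neg, norm_neg] using
    multipliable_one_add_of_summable (f := fun k : ℕ => -(a * p ^ k))
      (by simpa only [norm_neg] using summable_norm_mul_pow a hp)

lemma poch_ne_zero {a : ℂ} (hp : ‖p‖ < 1) (h : ∀ k : ℕ, 1 - a * p ^ k ≠ 0) : poch a p ≠ 0 := by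
  simpa only [poch, sub_eq_add_neg] using
    tprod_one_add_ne_zero_of_summable (f := fun k : ℕ => -(a * p ^ k))
      (by simpa only [sub_eq_add_neg] using h)
      (by simpa only [norm_neg] using summable_norm_mul_pow a hp)

lemma poch_eq_one_sub_mul_poch (hp : ‖p‖ < 1) (a : ℂ) : poch a p = (1 - a) * poch (p * a) p := by
  have hshift : (fun k : ℕ => 1 - a * p ^ (k + 1)) = fun k => 1 - p * a * p ^ k := by
    ext k
    ring
  rw [poch, poch, tprod_eq_zero_mul' (hshift ▸ multipliable_one_sub_mul_pow (p * a) hp), hshift,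
    pow_zero, mul_one]

end Poch

lemma kappa_eq_of_sq_eq_sq_mul {x ζ ξ : ℂ} (hx : x ≠ 0) (hξ : ξ ^ 2 = x ^ 2 * ζ ^ 2) :
    kappa x ξ = ξ * (poch (x^4 * (x^2 * ζ^2)) (x^4) * poch (ζ^2)⁻¹ (x^4)) /
      (poch (x^2 * (ζ^2)⁻¹) (x^4) * poch (x^4 * ζ^2) (x^4)) := by
  have h₁ : x^2 * (x^2 * ζ^2)⁻¹ = (ζ^2)⁻¹ := by field_simp
  have h₂ : x^4 * (x^2 * ζ^2)⁻¹ = x^2 * (ζ^2)⁻¹ := by field_simp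
  have h₃ : x^2 * (x^2 * ζ^2) = x^4 * ζ^2 := by ring
  rw [kappa, hξ, h₁, h₂, h₃]

/-- Crossing relation `κ(ζ) κ(εxζ) = ε b(ζ)` for `ε = ±1`. -/
theorem kappa_crossing (x ζ ε : ℂ) (hx0 : x ≠ 0) (hx : ‖x‖ < 1)
    (hζ : ζ ≠ 0) (hε : ε = 1 ∨ ε = -1)
    (hfac : ∀ k : ℕ, ∀ ξ ∈ ({ζ, ε * x * ζ} : Set ℂ),
      1 - x^4 * ξ^2 * (x^4) ^ k ≠ 0 ∧ 1 - x^2 * ξ^2 * (x^4) ^ k ≠ 0 ∧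
      1 - x^4 * (ξ^2)⁻¹ * (x^4) ^ k ≠ 0 ∧ 1 - x^2 * (ξ^2)⁻¹ * (x^4) ^ k ≠ 0) :
    kappa x ζ * kappa x (ε * x * ζ) = ε * bw x ζ := by
  have hq : ‖x ^ 4‖ < 1 := by
    rw [norm_pow]
    exact pow_lt_one₀ (norm_nonneg x) hx (by norm_num)
  have hsq : (ε * x * ζ) ^ 2 = x ^ 2 * ζ ^ 2 := by
    rcases hε with rfl | rfl <;> ring
  have hfacζ k := hfac k ζ (by simp)
  have hfacxζ k := hfac k (ε * x * ζ) (by simp)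
  simp only [hsq] at hfacxζ
  have h₁ := poch_ne_zero hq fun k => (hfacζ k).1
  have h₂ := poch_ne_zero hq fun k => (hfacζ k).2.2.1
  have h₃ := poch_ne_zero hq fun k => (hfacζ k).2.2.2
  have h₄ := poch_ne_zero hq fun k => (hfacxζ k).1
  have hxz : 1 - x ^ 2 * ζ ^ 2 ≠ 0 := by simpa using (hfacζ 0).2.1
  rw [kappa_eq_of_sq_eq_sq_mul hx0 hsq, kappa, poch_eq_one_sub_mul_poch hq (ζ^2)⁻¹,
    poch_eq_one_sub_mul_poch hq (x^2 * ζ^2), bw]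
  -- opaque names keep `field_simp` from normalising the arguments of `poch`
  generalize poch (x^4 * ζ^2) (x^4) = P₁, poch (x^4 * (ζ^2)⁻¹) (x^4) = P₂ at *
  generalize poch (x^2 * (ζ^2)⁻¹) (x^4) = P₃, poch (x^4 * (x^2 * ζ^2)) (x^4) = P₄ at *
  field_simp
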